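/- Let p > 1 and f(x) = (x+1)^p. There exist constants C > 0 and n_0 such that for all n ≥ n_0, all independent sequences {X_j}_{j≥n} with X_j exponentially distributed with rate f(j), and all δ > 0: P(∑_{j≥n} X_j > E[∑_{j≥n} X_j] + δ) ≤ C e^{-δ n^{p-1/2}} and P(∑_{j≥n} X_j < E[∑_{j≥n} X_j] − δ) ≤ C e^{-δ n^{p-1/2}}. -/

import Mathlib

open MeasureTheory ProbabilityTheory

/-- `X` is exponentially distributed with rate `l` under `μ`:
`P(X > t) = exp (-l * t)` for all `t ≥ 0`. -/
def IsExponential {Ω : Type*} [MeasurableSpace Ω] (μ : Measure Ω)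
    (X : Ω → ℝ) (l : ℝ) : Prop :=
  ∀ t : ℝ, 0 ≤ t → μ {ω | t < X ω} = ENNReal.ofReal (Real.exp (-l * t))

/-!
Take `λ = n ^ (p - 1/2)`. For `j ≥ n ≥ 4` the rate `f j = (j + 1) ^ p` is at least `2λ`, so
`E e^{±λ X_j} = f j / (f j ∓ λ) ≤ exp (±λ / f j + 2 (λ / f j)²)`, and
`∑_{j ≥ n} (λ / f j)² ≤ n ∑_{i > n} i⁻² ≤ 1`. Hence `E e^{±λ (S - E S)} ≤ e²` for the tail sum `S`,
and the Chernoff bound gives both tails with `C = e²`. The bound passes from the partial sums to `S`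
by Fatou's lemma; `S` is almost surely a convergent series because `E S = ∑_{j ≥ n} 1 / f j < ∞`.
-/

open Real Set Filter Topology
open scoped ENNReal

lemma one_div_one_sub_le_exp {x : ℝ} (hx : x ≤ 1 / 2) : 1 / (1 - x) ≤ exp (x + 2 * x ^ 2) := by
  have h1x : 0 < 1 - x := by linarith
  calc 1 / (1 - x) ≤ x + 2 * x ^ 2 + 1 := by
        rw [div_le_iff₀ h1x]
        nlinarith [mul_nonneg (sq_nonneg x) (by linarith : 0 ≤ 1 - 2 * x)]
    _ ≤ exp (x + 2 * x ^ 2) := add_one_le_exp _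

lemma summable_div_sq_of_summable_inv {l : ℕ → ℝ} (hl : ∀ j, 0 < l j)
    (hsum : Summable fun j => (l j)⁻¹) (t : ℝ) : Summable fun j => (t / l j) ^ 2 := by
  refine (hsum.mul_left (t ^ 2)).of_norm_bounded_eventually_nat ?_
  filter_upwards [hsum.tendsto_atTop_zero.eventually (ge_mem_nhds one_pos)] with j hj
  have hl0 := (inv_pos.2 (hl j)).le
  rw [norm_of_nonneg (sq_nonneg _), div_eq_mul_inv, mul_pow]
  exact mul_le_mul_of_nonneg_left (by nlinarith) (sq_nonneg t)

lemma lintegral_exp_mul_expMeasure {l t : ℝ} (hl : 0 < l) (ht : t < l) :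
    ∫⁻ x, ENNReal.ofReal (exp (t * x)) ∂expMeasure l = ENNReal.ofReal (l / (l - t)) := by
  have hlt : 0 < l - t := sub_pos.2 ht
  have hdensity : ∀ x, exponentialPDF l x * ENNReal.ofReal (exp (t * x))
      = (Ici 0).indicator (fun x => ENNReal.ofReal (l * exp (-(l - t) * x))) x := by
    intro x
    rw [exponentialPDF_eq]
    split_ifs with hx
    · rw [indicator_of_mem (mem_Ici.2 hx), ← ENNReal.ofReal_mul (by positivity), mul_assoc,
        ← exp_add]
      ring_nf
    · simp [hx]
  have hmeas : Measurable (exponentialPDF l) := (measurable_exponentialPDFReal l).ennreal_ofReal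
  calc ∫⁻ x, ENNReal.ofReal (exp (t * x)) ∂expMeasure l
      = ∫⁻ x in Ioi 0, ENNReal.ofReal (l * exp (-(l - t) * x)) := by
        rw [show expMeasure l = volume.withDensity (exponentialPDF l) from rfl,
          lintegral_withDensity_eq_lintegral_mul _ hmeas (by fun_prop)]
        simp only [Pi.mul_apply, hdensity]
        rw [lintegral_indicator measurableSet_Ici, Measure.restrict_congr_set Ioi_ae_eq_Ici]
    _ = ENNReal.ofReal (l / (l - t)) := by
        rw [← ofReal_integral_eq_lintegral_ofReal
          ((exp_neg_integrableOn_Ioi 0 hlt).const_mul l)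
          (ae_of_all _ fun x => by positivity), integral_const_mul,
          integral_exp_mul_Ioi (by linarith)]
        congr 1
        field_simp
        simp

namespace IsExponential

variable {Ω : Type*} [MeasurableSpace Ω] {μ : Measure Ω} [IsProbabilityMeasure μ] {X : Ω → ℝ}
  {l : ℝ}

lemma ae_pos (hX : Measurable X) (h : IsExponential μ X l) : ∀ᵐ ω ∂μ, 0 < X ω := by
  refine ae_iff_measure_eq (measurableSet_lt measurable_const hX).nullMeasurableSet |>.2 ?_
  simpa using h 0 le_rfl

lemma lintegral_ofReal (hX : Measurable X) (hl : 0 < l) (h : IsExponential μ X l) :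
    ∫⁻ ω, ENNReal.ofReal (X ω) ∂μ = ENNReal.ofReal l⁻¹ := by
  have hint : IntegrableOn (fun t => exp (-l * t)) (Ioi 0) := by
    simpa only [neg_mul] using exp_neg_integrableOn_Ioi 0 hl
  rw [lintegral_eq_lintegral_meas_lt μ ((h.ae_pos hX).mono fun _ => le_of_lt) hX.aemeasurable,
    setLIntegral_congr_fun measurableSet_Ioi fun t ht => h t (le_of_lt ht),
    ← ofReal_integral_eq_lintegral_ofReal hint
      (ae_of_all _ fun _ => (exp_pos _).le), integral_exp_mul_Ioi (neg_lt_zero.2 hl)]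
  simp

lemma map_eq_expMeasure (hX : Measurable X) (hl : 0 < l) (h : IsExponential μ X l) :
    μ.map X = expMeasure l := by
  have := isProbabilityMeasure_expMeasure hl
  refine Measure.ext_of_Iic _ _ fun a => ?_
  rw [← ofReal_cdf (expMeasure l), cdf_expMeasure_eq hl, Measure.map_apply hX measurableSet_Iic]
  have hcompl : X ⁻¹' Iic a = {ω | a < X ω}ᶜ := by ext; simp
  rw [hcompl, prob_compl_eq_one_sub (measurableSet_lt measurable_const hX)]
  split_ifs with ha
  · rw [h a ha, ENNReal.ofReal_sub _ (exp_pos _).le, ENNReal.ofReal_one, neg_mul]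
  · have hpos : μ {ω | 0 < X ω} = 1 := by simpa using h 0 le_rfl
    have : μ {ω | a < X ω} = 1 :=
      le_antisymm prob_le_one (hpos ▸ measure_mono fun ω hω => (not_le.1 ha).trans hω)
    simp [this]

lemma lintegral_exp_mul (hX : Measurable X) (hl : 0 < l) (h : IsExponential μ X l) {t : ℝ}
    (ht : t < l) :
    ∫⁻ ω, ENNReal.ofReal (exp (t * X ω)) ∂μ = ENNReal.ofReal (l / (l - t)) := by
  rw [← lintegral_exp_mul_expMeasure hl ht, ← h.map_eq_expMeasure hX hl,
    lintegral_map (by fun_prop) hX]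

lemma integrable_exp_mul (hX : Measurable X) (hl : 0 < l) (h : IsExponential μ X l) {t : ℝ}
    (ht : t < l) : Integrable (fun ω => exp (t * X ω)) μ := by
  refine ⟨by fun_prop, ?_⟩
  rw [hasFiniteIntegral_iff_ofReal (ae_of_all _ fun _ => (exp_pos _).le),
    h.lintegral_exp_mul hX hl ht]
  exact ENNReal.ofReal_lt_top

lemma mgf_eq (hX : Measurable X) (hl : 0 < l) (h : IsExponential μ X l) {t : ℝ}
    (ht : t < l) : mgf X μ t = l / (l - t) := by
  rw [mgf, integral_eq_lintegral_of_nonneg_ae (ae_of_all _ fun _ => (exp_pos _).le)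
    (by fun_prop), h.lintegral_exp_mul hX hl ht,
    ENNReal.toReal_ofReal (div_nonneg hl.le (sub_pos.2 ht).le)]

lemma mgf_le_exp (hX : Measurable X) (hl : 0 < l) (h : IsExponential μ X l) {t : ℝ}
    (ht : 2 * t ≤ l) : mgf X μ t ≤ exp (t / l + 2 * (t / l) ^ 2) := by
  rw [h.mgf_eq hX hl (by linarith), show l / (l - t) = 1 / (1 - t / l) by field_simp]
  exact one_div_one_sub_le_exp (by rw [div_le_iff₀ hl]; linarith)

end IsExponential

section TailSum

variable {Ω : Type*} [MeasurableSpace Ω] {μ : Measure Ω}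

lemma lintegral_le_of_tendsto_ae {f : ℕ → Ω → ℝ≥0∞} {g : Ω → ℝ≥0∞} {b : ℕ → ℝ≥0∞} {B : ℝ≥0∞}
    (hf : ∀ N, AEMeasurable (f N) μ) (hfg : ∀ᵐ ω ∂μ, Tendsto (fun N => f N ω) atTop (𝓝 (g ω)))
    (hfb : ∀ N, ∫⁻ ω, f N ω ∂μ ≤ b N) (hb : Tendsto b atTop (𝓝 B)) : ∫⁻ ω, g ω ∂μ ≤ B :=
  calc ∫⁻ ω, g ω ∂μ = ∫⁻ ω, liminf (fun N => f N ω) atTop ∂μ :=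
        lintegral_congr_ae (hfg.mono fun _ h => h.liminf_eq.symm)
    _ ≤ liminf (fun N => ∫⁻ ω, f N ω ∂μ) atTop := lintegral_liminf_le' hf
    _ ≤ liminf b atTop := liminf_le_liminf (Eventually.of_forall hfb)
    _ = B := hb.liminf_eq

lemma integrable_exp_mul_and_mgf_le {Z : Ω → ℝ} (hZ : AEMeasurable Z μ) {t b : ℝ} (hb : 0 ≤ b)
    (h : ∫⁻ ω, ENNReal.ofReal (exp (t * Z ω)) ∂μ ≤ ENNReal.ofReal b) :
    Integrable (fun ω => exp (t * Z ω)) μ ∧ mgf Z μ t ≤ b := by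
  have hint : Integrable (fun ω => exp (t * Z ω)) μ := by
    refine ⟨by fun_prop, ?_⟩
    rw [hasFiniteIntegral_iff_ofReal (ae_of_all _ fun _ => (exp_pos _).le)]
    exact h.trans_lt ENNReal.ofReal_lt_top
  refine ⟨hint, ?_⟩
  rw [mgf, integral_eq_lintegral_of_nonneg_ae (ae_of_all _ fun _ => (exp_pos _).le)
    hint.aestronglyMeasurable]
  exact ENNReal.toReal_le_of_le_ofReal hb h

variable [IsProbabilityMeasure μ] {Y : ℕ → Ω → ℝ} {l : ℕ → ℝ}

lemma ae_summable_of_isExponential (hY : ∀ j, Measurable (Y j)) (hl : ∀ j, 0 < l j)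
    (hexp : ∀ j, IsExponential μ (Y j) (l j)) (hsum : Summable fun j => (l j)⁻¹) :
    ∀ᵐ ω ∂μ, Summable fun j => Y j ω := by
  have hnonneg : ∀ᵐ ω ∂μ, ∀ j, 0 ≤ Y j ω :=
    ae_all_iff.2 fun j => ((hexp j).ae_pos (hY j)).mono fun _ => le_of_lt
  have hmeas : ∀ j, AEMeasurable (fun ω => ENNReal.ofReal (Y j ω)) μ :=
    fun j => (hY j).ennreal_ofReal.aemeasurable
  have hfin : ∫⁻ ω, ∑' j, ENNReal.ofReal (Y j ω) ∂μ ≠ ∞ := by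
    rw [lintegral_tsum hmeas, tsum_congr fun j => (hexp j).lintegral_ofReal (hY j) (hl j),
      ← ENNReal.ofReal_tsum_of_nonneg (fun j => (inv_pos.2 (hl j)).le) hsum]
    exact ENNReal.ofReal_ne_top
  filter_upwards [hnonneg, ae_lt_top' (AEMeasurable.tsum hmeas) hfin] with ω hω hω'
  exact (ENNReal.summable_toReal hω'.ne).congr fun j => ENNReal.toReal_ofReal (hω j)

namespace ProbabilityTheory.iIndepFun

variable {t : ℝ}

lemma lintegral_exp_mul_sum_le (hindep : iIndepFun Y μ) (hY : ∀ j, Measurable (Y j))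
    (hl : ∀ j, 0 < l j) (hexp : ∀ j, IsExponential μ (Y j) (l j)) (ht : ∀ j, 2 * t ≤ l j)
    (s : Finset ℕ) :
    ∫⁻ ω, ENNReal.ofReal (exp (t * ∑ j ∈ s, Y j ω)) ∂μ
      ≤ ENNReal.ofReal (exp (∑ j ∈ s, (t / l j + 2 * (t / l j) ^ 2))) := by
  have hint := hindep.integrable_exp_mul_sum hY (s := s) fun j _ =>
    (hexp j).integrable_exp_mul (hY j) (hl j) (by linarith [ht j, hl j])
  simp only [Finset.sum_apply] at hint
  rw [← ofReal_integral_eq_lintegral_ofReal hint (ae_of_all _ fun _ => (exp_pos _).le)]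
  refine ENNReal.ofReal_le_ofReal ?_
  calc ∫ ω, exp (t * ∑ j ∈ s, Y j ω) ∂μ = ∏ j ∈ s, mgf (Y j) μ t := by
        rw [← hindep.mgf_sum hY]
        simp only [mgf, Finset.sum_apply]
    _ ≤ ∏ j ∈ s, exp (t / l j + 2 * (t / l j) ^ 2) :=
        Finset.prod_le_prod (fun _ _ => mgf_nonneg)
          fun j _ => (hexp j).mgf_le_exp (hY j) (hl j) (ht j)
    _ = exp (∑ j ∈ s, (t / l j + 2 * (t / l j) ^ 2)) := (exp_sum _ _).symm

lemma mgf_tsum_le (hindep : iIndepFun Y μ) (hY : ∀ j, Measurable (Y j)) (hl : ∀ j, 0 < l j)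
    (hexp : ∀ j, IsExponential μ (Y j) (l j)) (hsum : Summable fun j => (l j)⁻¹)
    (ht : ∀ j, 2 * t ≤ l j) :
    Integrable (fun ω => exp (t * ∑' j, Y j ω)) μ ∧
      mgf (fun ω => ∑' j, Y j ω) μ t ≤ exp (t * ∑' j, (l j)⁻¹ + 2 * ∑' j, (t / l j) ^ 2) := by
  have hseries : HasSum (fun j => t / l j + 2 * (t / l j) ^ 2)
      (t * ∑' j, (l j)⁻¹ + 2 * ∑' j, (t / l j) ^ 2) := by
    simpa only [div_eq_mul_inv, tsum_mul_left] using (hsum.hasSum.mul_left t).add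
      ((summable_div_sq_of_summable_inv hl hsum t).hasSum.mul_left 2)
  refine integrable_exp_mul_and_mgf_le (Measurable.tsum hY).aemeasurable (exp_pos _).le ?_
  exact lintegral_le_of_tendsto_ae (fun N => by fun_prop)
    ((ae_summable_of_isExponential hY hl hexp hsum).mono fun _ hω =>
      ENNReal.tendsto_ofReal (hω.hasSum.tendsto_sum_nat.const_mul t).rexp)
    (fun N => hindep.lintegral_exp_mul_sum_le hY hl hexp ht (Finset.range N))
    (ENNReal.tendsto_ofReal hseries.tendsto_sum_nat.rexp)

end ProbabilityTheory.iIndepFun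

end TailSum

section Chernoff

variable {Ω : Type*} [MeasurableSpace Ω] {μ : Measure Ω} [IsFiniteMeasure μ] {Z : Ω → ℝ}
  {t m K : ℝ}

lemma measure_add_lt_le_of_mgf_le (ht : 0 ≤ t) (hint : Integrable (fun ω => exp (t * Z ω)) μ)
    (hmgf : mgf Z μ t ≤ exp (t * m + K)) (δ : ℝ) :
    μ {ω | m + δ < Z ω} ≤ ENNReal.ofReal (exp K * exp (-δ * t)) := by
  calc μ {ω | m + δ < Z ω} ≤ μ {ω | m + δ ≤ Z ω} := measure_mono fun ω (h : m + δ < Z ω) => h.le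
    _ = ENNReal.ofReal (μ.real {ω | m + δ ≤ Z ω}) :=
        (ofReal_measureReal (measure_ne_top _ _)).symm
    _ ≤ ENNReal.ofReal (exp (-t * (m + δ)) * exp (t * m + K)) :=
        ENNReal.ofReal_le_ofReal <| (measure_ge_le_exp_mul_mgf _ ht hint).trans <|
          mul_le_mul_of_nonneg_left hmgf (exp_pos _).le
    _ = ENNReal.ofReal (exp K * exp (-δ * t)) := by
        rw [← exp_add, ← exp_add]
        ring_nf

lemma measure_lt_sub_le_of_mgf_le (ht : 0 ≤ t) (hint : Integrable (fun ω => exp (-t * Z ω)) μ)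
    (hmgf : mgf Z μ (-t) ≤ exp (-t * m + K)) (δ : ℝ) :
    μ {ω | Z ω < m - δ} ≤ ENNReal.ofReal (exp K * exp (-δ * t)) := by
  have hset : {ω | Z ω < m - δ} = {ω | -m + δ < (-Z) ω} := by
    ext ω
    simp only [mem_ofPred_eq, Pi.neg_apply]
    constructor <;> intro h <;> linarith
  rw [hset]
  refine measure_add_lt_le_of_mgf_le ht ?_ ?_ δ
  · simpa only [Pi.neg_apply, mul_neg, neg_mul] using hint
  · rwa [mgf_neg, mul_neg, ← neg_mul]

end Chernoff

lemma tsum_ite_le_eq_tsum_add {M : Type*} [AddCommMonoid M] [TopologicalSpace M] (f : ℕ → M)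
    (n : ℕ) : ∑' j, (if n ≤ j then f j else 0) = ∑' k, f (k + n) := by
  rw [← (add_left_injective n).tsum_eq]
  · simp
  · intro j hj
    have hnj : n ≤ j := by
      by_contra h
      simp [h] at hj
    exact ⟨j - n, Nat.sub_add_cancel hnj⟩

section Rates

variable {p x y : ℝ}

lemma rpow_sub_half_eq (hy : 0 < y) (p : ℝ) : y ^ (p - 1 / 2) = y ^ (p - 1) * √y := by
  rw [sqrt_eq_rpow, ← rpow_add hy]
  ring_nf

lemma rpow_sub_one_mul_self (hx : 0 < x) (p : ℝ) : x ^ (p - 1) * x = x ^ p := by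
  rw [rpow_sub_one hx.ne', div_mul_cancel₀ _ hx.ne']

lemma two_mul_rpow_sub_half_le (hp : 1 ≤ p) (hy : 4 ≤ y) (hyx : y ≤ x) :
    2 * y ^ (p - 1 / 2) ≤ x ^ p := by
  have hy0 : 0 < y := by linarith
  have hx0 : 0 < x := by linarith
  have hsqrt : 2 ≤ √y := by
    rw [show (2 : ℝ) = √4 by rw [show (4 : ℝ) = 2 ^ 2 by norm_num, sqrt_sq zero_le_two]]
    exact sqrt_le_sqrt hy
  have h2 : 2 * √y ≤ x := by nlinarith [sq_sqrt hy0.le]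
  calc 2 * y ^ (p - 1 / 2) = y ^ (p - 1) * (2 * √y) := by rw [rpow_sub_half_eq hy0]; ring
    _ ≤ x ^ (p - 1) * x :=
        mul_le_mul (rpow_le_rpow hy0.le hyx (by linarith)) h2 (by positivity) (by positivity)
    _ = x ^ p := rpow_sub_one_mul_self hx0 p

lemma rpow_sub_half_div_rpow_le (hp : 1 ≤ p) (hy : 0 < y) (hyx : y ≤ x) :
    y ^ (p - 1 / 2) / x ^ p ≤ √y / x := by
  have hx : 0 < x := hy.trans_le hyx
  have hratio : y ^ (p - 1) / x ^ (p - 1) ≤ 1 :=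
    div_le_one_of_le₀ (rpow_le_rpow hy.le hyx (by linarith)) (by positivity)
  calc y ^ (p - 1 / 2) / x ^ p = y ^ (p - 1) / x ^ (p - 1) * (√y / x) := by
        rw [rpow_sub_half_eq hy, ← rpow_sub_one_mul_self hx p, mul_div_mul_comm]
    _ ≤ √y / x := mul_le_of_le_one_left (by positivity) hratio

lemma tsum_sq_rpow_sub_half_div_le (hp : 1 ≤ p) {n : ℕ} (hn : 0 < n) :
    ∑' k : ℕ, ((n : ℝ) ^ (p - 1 / 2) / (((k + n : ℕ) : ℝ) + 1) ^ p) ^ 2 ≤ 1 := by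
  have hn0 : (0 : ℝ) < n := by exact_mod_cast hn
  refine Real.tsum_le_of_sum_range_le (fun _ => sq_nonneg _) fun N => ?_
  calc ∑ k ∈ Finset.range N, ((n : ℝ) ^ (p - 1 / 2) / (((k + n : ℕ) : ℝ) + 1) ^ p) ^ 2
      ≤ ∑ k ∈ Finset.range N, (n : ℝ) * ((((n + 1 + k : ℕ) : ℝ)) ^ 2)⁻¹ := by
        refine Finset.sum_le_sum fun k _ => ?_
        have hle := rpow_sub_half_div_rpow_le hp hn0 (x := ((k + n : ℕ) : ℝ) + 1)
          (by push_cast; linarith [(k.cast_nonneg : (0 : ℝ) ≤ k)])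
        calc _ ≤ (√(n : ℝ) / (((k + n : ℕ) : ℝ) + 1)) ^ 2 :=
              pow_le_pow_left₀ (by positivity) hle 2
          _ = _ := by
              rw [div_pow, sq_sqrt hn0.le]
              push_cast
              ring_nf
    _ = n * ∑ i ∈ Finset.Ioc n (n + N), ((i : ℝ) ^ 2)⁻¹ := by
        rw [← Finset.mul_sum, ← Finset.Ico_add_one_add_one_eq_Ioc, Finset.sum_Ico_eq_sum_range]
        congr 3
        omega
    _ ≤ n * ((n : ℝ)⁻¹ - ((n + N : ℕ) : ℝ)⁻¹) :=
        mul_le_mul_of_nonneg_left (sum_Ioc_inv_sq_le_sub hn.ne' (by omega)) hn0.le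
    _ ≤ 1 := by
        rw [mul_sub, mul_inv_cancel₀ hn0.ne']
        have : 0 ≤ (n : ℝ) * ((n + N : ℕ) : ℝ)⁻¹ := by positivity
        linarith

lemma summable_inv_rpow_nat_add (hp : 1 < p) (n : ℕ) :
    Summable fun k : ℕ => ((((k + n : ℕ) : ℝ) + 1) ^ p)⁻¹ := by
  refine ((Real.summable_one_div_nat_add_rpow (n + 1) p).2 hp).congr fun k => ?_
  rw [one_div, abs_of_nonneg (by positivity)]
  push_cast
  ring_nf

end Rates

/-- Large deviation bound for tail sums of independent exponentials with rates
`f(j) = (j+1)^p`, `p > 1`: there are constants `C, n₀ > 0` (depending only on `p`)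
such that for all `n ≥ n₀`, all independent sequences `{X_j ~ Exp((j+1)^p)}_{j ≥ n}`
and all `δ > 0`, the tail sum `∑_{j ≥ n} X_j` deviates from its mean
`∑_{j ≥ n} (j+1)^{-p}` by more than `δ` (in either direction) with probability at
most `C e^{-δ n^{p - 1/2}}`. -/
theorem tail_sum_large_deviations (p : ℝ) (hp : 1 < p) :
    ∃ C > (0 : ℝ), ∃ n₀ : ℕ, 0 < n₀ ∧ ∀ n : ℕ, n₀ ≤ n →
      ∀ (Ω : Type) (_ : MeasurableSpace Ω) (μ : Measure Ω),
        IsProbabilityMeasure μ →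
        ∀ X : ℕ → Ω → ℝ, (∀ j, Measurable (X j)) →
          iIndepFun X μ →
          (∀ j : ℕ, n ≤ j → IsExponential μ (X j) (((j : ℝ) + 1) ^ p)) →
          ∀ δ : ℝ, 0 < δ →
            μ {ω | (∑' j : ℕ, if n ≤ j then X j ω else 0)
                    > (∑' j : ℕ, if n ≤ j then ((j : ℝ) + 1) ^ (-p) else 0) + δ}
              ≤ ENNReal.ofReal (C * Real.exp (-δ * (n : ℝ) ^ (p - 1/2)))
            ∧ μ {ω | (∑' j : ℕ, if n ≤ j then X j ω else 0)
                    < (∑' j : ℕ, if n ≤ j then ((j : ℝ) + 1) ^ (-p) else 0) - δ}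
              ≤ ENNReal.ofReal (C * Real.exp (-δ * (n : ℝ) ^ (p - 1/2))) := by
  refine ⟨exp 2, exp_pos 2, 4, by norm_num, fun n hn Ω _ μ _ X hX hindep hexp δ _ => ?_⟩
  set lam := (n : ℝ) ^ (p - 1 / 2)
  set l : ℕ → ℝ := fun k => (((k + n : ℕ) : ℝ) + 1) ^ p
  have hlam : 0 < lam := by positivity
  have hl : ∀ k, 0 < l k := fun k => by positivity
  have h2lam : ∀ k, 2 * lam ≤ l k := fun k =>
    two_mul_rpow_sub_half_le hp.le (by exact_mod_cast hn) (by push_cast; linarith)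
  have hquad : 2 * ∑' k, (lam / l k) ^ 2 ≤ 2 := by
    linarith [tsum_sq_rpow_sub_half_div_le hp.le (n := n) (by omega)]
  have hmean : (∑' j : ℕ, if n ≤ j then ((j : ℝ) + 1) ^ (-p) else 0) = ∑' k, (l k)⁻¹ := by
    rw [tsum_ite_le_eq_tsum_add]
    exact tsum_congr fun k => rpow_neg (by positivity) p
  simp only [tsum_ite_le_eq_tsum_add, hmean, gt_iff_lt]
  have hindep' : iIndepFun (fun k => X (k + n)) μ := hindep.precomp (add_left_injective n)
  have hexp' : ∀ k, IsExponential μ (X (k + n)) (l k) := fun k => by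
    simpa [l] using hexp (k + n) (Nat.le_add_left n k)
  have hsum := summable_inv_rpow_nat_add hp n
  obtain ⟨hint_pos, hmgf_pos⟩ := hindep'.mgf_tsum_le (fun _ => hX _) hl hexp' hsum h2lam
  obtain ⟨hint_neg, hmgf_neg⟩ := hindep'.mgf_tsum_le (fun _ => hX _) hl hexp' hsum (t := -lam)
    fun k => by linarith [hl k]
  simp only [neg_div, neg_sq] at hmgf_neg
  exact ⟨measure_add_lt_le_of_mgf_le hlam.le hint_pos (hmgf_pos.trans (by gcongr)) δ,
    measure_lt_sub_le_of_mgf_le hlam.le hint_neg (hmgf_neg.trans (by gcongr)) δ⟩
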